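/- arXiv:2308.15145 — 6 statements merged into one kernel-verified Lean document; each statement's English description precedes it below -/
import Mathlib

section
/- Let S, Y ∈ ℝ^{n×m} with S of full column rank. There exists a symmetric matrix A₊ ∈ ℝ^{n×n} with Y = A₊ S if and only if YᵀS is symmetric. -/
open Matrix

lemma isUnit_of_rank_eq_card {m : ℕ} (G : Matrix (Fin m) (Fin m) ℝ)
    (h : G.rank = m) : IsUnit G := by
  rw [← Matrix.mulVec_surjective_iff_isUnit]
  have hr : LinearMap.range G.mulVecLin = ⊤ := by
    apply Submodule.eq_top_of_finrank_eq
    rw [← Matrix.rank, h]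
    simp [Module.finrank_pi]
  exact LinearMap.range_eq_top.mp hr

/-- Schnabel's theorem: for `S` of full column rank, there exists a symmetric `A₊`
with `Y = A₊ S` if and only if `YᵀS` is symmetric. -/
theorem schnabel_symmetric_secant
    (n m : ℕ) (S Y : Matrix (Fin n) (Fin m) ℝ) (hS : S.rank = m) :
    (∃ Ap : Matrix (Fin n) (Fin n) ℝ, Ap.IsSymm ∧ Y = Ap * S) ↔ (Yᵀ * S).IsSymm := by
  constructor
  · rintro ⟨Ap, hsym, rfl⟩
    simp [Matrix.IsSymm, Matrix.transpose_mul, Matrix.mul_assoc, hsym.eq]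
  · intro hsym
    set G := Sᵀ * S with hG
    have hGunit : IsUnit G := by
      apply isUnit_of_rank_eq_card
      rw [hG, Matrix.rank_transpose_mul_self, hS]
    have hdet : IsUnit G.det := (Matrix.isUnit_iff_isUnit_det G).mp hGunit
    have hGinv : G * G⁻¹ = 1 := Matrix.mul_nonsing_inv _ hdet
    have hGinv' : G⁻¹ * G = 1 := Matrix.nonsing_inv_mul _ hdet
    have hGsymm : Gᵀ = G := by rw [hG, Matrix.transpose_mul, Matrix.transpose_transpose]
    have hGinvsymm : (G⁻¹)ᵀ = G⁻¹ := by
      rw [Matrix.transpose_nonsing_inv, hGsymm]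
    have hSY : Sᵀ * Y = Yᵀ * S := by
      have := hsym.eq
      simpa [Matrix.transpose_mul] using this
    refine ⟨Y * G⁻¹ * Sᵀ + S * G⁻¹ * Yᵀ - S * G⁻¹ * (Yᵀ * S) * G⁻¹ * Sᵀ, ?_, ?_⟩
    · unfold Matrix.IsSymm
      simp only [Matrix.transpose_sub, Matrix.transpose_add, Matrix.transpose_mul,
        Matrix.transpose_transpose, hGinvsymm, hSY]
      simp only [Matrix.mul_assoc]
      abel
    · have h1 : Y * G⁻¹ * Sᵀ * S = Y := by
        rw [Matrix.mul_assoc (Y * G⁻¹), ← hG, Matrix.mul_assoc, hGinv', Matrix.mul_one]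
      have h3 : S * G⁻¹ * (Yᵀ * S) * G⁻¹ * Sᵀ * S = S * G⁻¹ * (Yᵀ * S) := by
        rw [Matrix.mul_assoc (S * G⁻¹ * (Yᵀ * S) * G⁻¹), ← hG,
          Matrix.mul_assoc (S * G⁻¹ * (Yᵀ * S)), hGinv', Matrix.mul_one]
      rw [Matrix.sub_mul, Matrix.add_mul, h1, h3, Matrix.mul_assoc (S * G⁻¹)]
      abel
end

section
/- Let S, Y ∈ ℝ^{n×m} with S of full column rank. There exists a symmetric positive definite matrix A₊ ∈ ℝ^{n×n} with Y = A₊ S if and only if YᵀS is symmetric positive definite. -/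
open Matrix

private lemma dp_self_pos {k : ℕ} {v : Fin k → ℝ} (h : v ≠ 0) : 0 < v ⬝ᵥ v := by
  have h0 : 0 ≤ v ⬝ᵥ v := Finset.sum_nonneg fun i _ => mul_self_nonneg _
  rcases h0.lt_or_eq with h'|h'
  · exact h'
  · exact absurd (dotProduct_self_eq_zero.mp h'.symm) h

/-- Quadratic form identity: `x ⬝ (BᵀAB x) = (Bx) ⬝ A (Bx)`. -/
private lemma quad_conj {n m : ℕ} (A : Matrix (Fin n) (Fin n) ℝ)
    (B : Matrix (Fin n) (Fin m) ℝ) (x : Fin m → ℝ) :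
    x ⬝ᵥ ((Bᵀ * A * B) *ᵥ x) = (B *ᵥ x) ⬝ᵥ (A *ᵥ (B *ᵥ x)) := by
  rw [← mulVec_mulVec, ← mulVec_mulVec, dotProduct_mulVec, vecMul_transpose]

private lemma quad_conj' {n m : ℕ} (A : Matrix (Fin m) (Fin m) ℝ)
    (B : Matrix (Fin n) (Fin m) ℝ) (x : Fin n → ℝ) :
    x ⬝ᵥ ((B * A * Bᵀ) *ᵥ x) = (Bᵀ *ᵥ x) ⬝ᵥ (A *ᵥ (Bᵀ *ᵥ x)) := by
  have := quad_conj (n := m) (m := n) A Bᵀ x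
  rwa [transpose_transpose] at this

/-- Schnabel's theorem (definite version): for `S` of full column rank, there exists a
symmetric positive definite `A₊` with `Y = A₊ S` if and only if `YᵀS` is symmetric
positive definite. -/
theorem schnabel_posdef_secant
    (n m : ℕ) (S Y : Matrix (Fin n) (Fin m) ℝ) (hS : S.rank = m) :
    (∃ Ap : Matrix (Fin n) (Fin n) ℝ, Ap.PosDef ∧ Y = Ap * S) ↔ (Yᵀ * S).PosDef := by
  -- S has trivial kernel
  have hSinj : ∀ u : Fin m → ℝ, S *ᵥ u = 0 → u = 0 := by
    have h1 := LinearMap.finrank_range_add_finrank_ker S.mulVecLin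
    rw [show Module.finrank ℝ (LinearMap.range S.mulVecLin) = S.rank from rfl, hS,
      Module.finrank_fin_fun] at h1
    have hker : Module.finrank ℝ (LinearMap.ker S.mulVecLin) = 0 := by omega
    rw [Submodule.finrank_eq_zero] at hker
    intro u hu
    have : u ∈ LinearMap.ker S.mulVecLin := hu
    simpa [hker] using this
  constructor
  · rintro ⟨Ap, hAp, rfl⟩
    have hApT : Apᵀ = Ap := by
      rw [← conjTranspose_eq_transpose_of_trivial]; exact hAp.isHermitian.eq
    have hconj : (Ap * S)ᵀ * S = Sᵀ * Ap * S := by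
      rw [transpose_mul, hApT, Matrix.mul_assoc]
    rw [hconj]
    refine posDef_iff_dotProduct_mulVec.mpr ⟨?_, ?_⟩
    · have := hAp.posSemidef.conjTranspose_mul_mul_same S
      simpa [conjTranspose_eq_transpose_of_trivial, Matrix.mul_assoc] using this.isHermitian
    · intro x hx
      have hSx : S *ᵥ x ≠ 0 := fun h => hx (hSinj x h)
      have := hAp.dotProduct_mulVec_pos hSx
      simpa [quad_conj] using this
  · intro hG
    set G := Yᵀ * S with hGdef
    -- T = SᵀS is positive definite
    have hT : (Sᵀ * S).PosDef := by
      refine posDef_iff_dotProduct_mulVec.mpr ⟨(by simpa [conjTranspose_eq_transpose_of_trivial] using (posSemidef_conjTranspose_mul_self S).isHermitian), fun x hx => ?_⟩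
      have hSx : S *ᵥ x ≠ 0 := fun h => hx (hSinj x h)
      have h1 : x ⬝ᵥ ((Sᵀ * S) *ᵥ x) = (S *ᵥ x) ⬝ᵥ (S *ᵥ x) := by
        have := quad_conj (1 : Matrix (Fin n) (Fin n) ℝ) S x
        simpa using this
      rw [star_trivial, h1]
      exact dp_self_pos hSx
    set T := Sᵀ * S with hTdef
    have hGdet : IsUnit G.det := (isUnit_iff_isUnit_det G).mp hG.isUnit
    have hTdet : IsUnit T.det := (isUnit_iff_isUnit_det T).mp hT.isUnit
    have hGinv : G⁻¹ * G = 1 := nonsing_inv_mul G hGdet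
    have hTinv : T⁻¹ * T = 1 := nonsing_inv_mul T hTdet
    have hTinv' : T * T⁻¹ = 1 := mul_nonsing_inv T hTdet
    have hGiT : (G⁻¹)ᵀ = G⁻¹ := by
      rw [← conjTranspose_eq_transpose_of_trivial]; exact hG.inv.isHermitian.eq
    have hTiT : (T⁻¹)ᵀ = T⁻¹ := by
      rw [← conjTranspose_eq_transpose_of_trivial]; exact hT.inv.isHermitian.eq
    -- the candidate matrix
    refine ⟨Y * G⁻¹ * Yᵀ + (1 - S * T⁻¹ * Sᵀ), ?_, ?_⟩
    · refine posDef_iff_dotProduct_mulVec.mpr ⟨?_, ?_⟩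
      · -- Hermitian
        show _ᴴ = _
        simp only [conjTranspose_eq_transpose_of_trivial, transpose_add, transpose_sub,
          transpose_one, transpose_mul, transpose_transpose, hGiT, hTiT, Matrix.mul_assoc]
      · -- positivity
        intro x hx
        rw [star_trivial, add_mulVec, dotProduct_add]
        have hSTS : S * T⁻¹ * Sᵀ * (S * T⁻¹ * Sᵀ) = S * T⁻¹ * Sᵀ := by
          calc S * T⁻¹ * Sᵀ * (S * T⁻¹ * Sᵀ)
              = S * (T⁻¹ * (T * T⁻¹)) * Sᵀ := by
                rw [hTdef]; simp only [Matrix.mul_assoc]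
            _ = S * T⁻¹ * Sᵀ := by rw [hTinv', Matrix.mul_one, Matrix.mul_assoc]
        have hP2 : (1 - S * T⁻¹ * Sᵀ) * (1 - S * T⁻¹ * Sᵀ) = 1 - S * T⁻¹ * Sᵀ := by
          rw [Matrix.sub_mul, Matrix.mul_sub, Matrix.mul_sub, Matrix.one_mul, Matrix.mul_one,
            hSTS, Matrix.one_mul, sub_self, sub_zero]
        have hPsym : (1 - S * T⁻¹ * Sᵀ)ᵀ = 1 - S * T⁻¹ * Sᵀ := by
          simp only [transpose_sub, transpose_one, transpose_mul, transpose_transpose,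
            hTiT, Matrix.mul_assoc]
        have hPquad : x ⬝ᵥ ((1 - S * T⁻¹ * Sᵀ) *ᵥ x)
            = ((1 - S * T⁻¹ * Sᵀ) *ᵥ x) ⬝ᵥ ((1 - S * T⁻¹ * Sᵀ) *ᵥ x) := by
          conv_lhs => rw [← hP2]
          rw [← mulVec_mulVec, dotProduct_mulVec, ← mulVec_transpose, hPsym]
        have hY : x ⬝ᵥ ((Y * G⁻¹ * Yᵀ) *ᵥ x) = (Yᵀ *ᵥ x) ⬝ᵥ (G⁻¹ *ᵥ (Yᵀ *ᵥ x)) :=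
          quad_conj' G⁻¹ Y x
        by_cases hPx : (1 - S * T⁻¹ * Sᵀ) *ᵥ x = 0
        · -- then x is in the range of S and Yᵀ x ≠ 0
          have hxeq : x = S *ᵥ ((T⁻¹ * Sᵀ) *ᵥ x) := by
            have h := hPx
            rw [sub_mulVec, one_mulVec, sub_eq_zero] at h
            rw [mulVec_mulVec, ← Matrix.mul_assoc]
            exact h
          set u := (T⁻¹ * Sᵀ) *ᵥ x with hu
          have hune : u ≠ 0 := by
            intro h
            apply hx
            rw [hxeq, h, mulVec_zero]
          have hYx : Yᵀ *ᵥ x = G *ᵥ u := by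
            conv_lhs => rw [hxeq]
            rw [mulVec_mulVec, ← hGdef]
          have hYxne : Yᵀ *ᵥ x ≠ 0 := by
            rw [hYx]
            intro h
            apply hune
            have h2 : G⁻¹ *ᵥ (G *ᵥ u) = 0 := by rw [h, mulVec_zero]
            rwa [mulVec_mulVec, hGinv, one_mulVec] at h2
          have h1 : 0 < (Yᵀ *ᵥ x) ⬝ᵥ (G⁻¹ *ᵥ (Yᵀ *ᵥ x)) := by
            have := hG.inv.dotProduct_mulVec_pos hYxne
            simpa using this
          have h2 : x ⬝ᵥ ((1 - S * T⁻¹ * Sᵀ) *ᵥ x) = 0 := by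
            rw [hPx, dotProduct_zero]
          rw [hY, h2]
          linarith
        · have h1 : 0 ≤ (Yᵀ *ᵥ x) ⬝ᵥ (G⁻¹ *ᵥ (Yᵀ *ᵥ x)) := by
            have := hG.inv.posSemidef.dotProduct_mulVec_nonneg (Yᵀ *ᵥ x)
            simpa using this
          have h2 : 0 < x ⬝ᵥ ((1 - S * T⁻¹ * Sᵀ) *ᵥ x) := by
            rw [hPquad]
            exact dp_self_pos hPx
          rw [hY]
          linarith
    · -- the secant equation
      have hYS : Y * G⁻¹ * Yᵀ * S = Y := by
        have h : Y * G⁻¹ * Yᵀ * S = Y * (G⁻¹ * (Yᵀ * S)) := by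
          simp only [Matrix.mul_assoc]
        rw [h, ← hGdef, hGinv, Matrix.mul_one]
      have hPS : (1 - S * T⁻¹ * Sᵀ) * S = 0 := by
        have h : (1 - S * T⁻¹ * Sᵀ) * S = S - S * (T⁻¹ * (Sᵀ * S)) := by
          rw [Matrix.sub_mul, Matrix.one_mul]; simp only [Matrix.mul_assoc]
        rw [h, ← hTdef, hTinv, Matrix.mul_one, sub_self]
      rw [Matrix.add_mul, hYS, hPS, add_zero]
end

section
/- Let S ∈ ℝ^{n×m} have full column rank and Y ∈ ℝ^{n×m} be arbitrary. Then the minimization of ‖Y - S B‖ (Frobenius norm) over symmetric matrices B ∈ ℝ^{m×m} has a unique solution, and it is the unique solution of the Lyapunov equation (SᵀS) B + B (SᵀS) = SᵀY + YᵀS. -/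
open Matrix

/-- Squared Frobenius norm of a real matrix. -/
def frobSq {a b : Type*} [Fintype a] [Fintype b] (M : Matrix a b ℝ) : ℝ :=
  ∑ i, ∑ j, (M i j) ^ 2

lemma frobSq_eq_trace {a b : Type*} [Fintype a] [Fintype b] (M : Matrix a b ℝ) :
    frobSq M = (Mᵀ * M).trace := by
  simp only [frobSq, Matrix.trace, Matrix.diag, Matrix.mul_apply, Matrix.transpose_apply]
  rw [Finset.sum_comm]
  simp [sq]

lemma frobSq_nonneg {a b : Type*} [Fintype a] [Fintype b] (M : Matrix a b ℝ) :
    0 ≤ frobSq M :=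
  Finset.sum_nonneg fun _ _ => Finset.sum_nonneg fun _ _ => sq_nonneg _

lemma frobSq_eq_zero {a b : Type*} [Fintype a] [Fintype b] {M : Matrix a b ℝ}
    (h : frobSq M = 0) : M = 0 := by
  ext i j
  have h1 : ∀ i ∈ Finset.univ, (0:ℝ) ≤ ∑ j, (M i j)^2 :=
    fun _ _ => Finset.sum_nonneg fun _ _ => sq_nonneg _
  have h2 := (Finset.sum_eq_zero_iff_of_nonneg h1).mp h i (Finset.mem_univ i)
  have h3 := (Finset.sum_eq_zero_iff_of_nonneg
    (fun j _ => sq_nonneg (M i j))).mp h2 j (Finset.mem_univ j)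
  exact pow_eq_zero_iff (by norm_num) |>.mp h3

lemma frobSq_sub_expand {n m : ℕ} (A P : Matrix (Fin n) (Fin m) ℝ) :
    frobSq (A - P) = frobSq A - ((Aᵀ*P).trace + (Pᵀ*A).trace) + frobSq P := by
  simp only [frobSq_eq_trace, Matrix.transpose_sub, Matrix.sub_mul, Matrix.mul_sub,
    Matrix.trace_sub]
  ring

lemma mulVec_inj_of_rank {n m : ℕ} {S : Matrix (Fin n) (Fin m) ℝ} (hS : S.rank = m)
    {v : Fin m → ℝ} (hv : S.mulVec v = 0) : v = 0 := by
  have h1 : Module.finrank ℝ (LinearMap.range S.mulVecLin) = m := hS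
  have h2 := LinearMap.finrank_range_add_finrank_ker S.mulVecLin
  rw [Module.finrank_fin_fun, h1] at h2
  have h3 : Module.finrank ℝ (LinearMap.ker S.mulVecLin) = 0 := by omega
  have h4 : LinearMap.ker S.mulVecLin = ⊥ := Submodule.finrank_eq_zero.mp h3
  have h5 : v ∈ LinearMap.ker S.mulVecLin := by
    simpa [LinearMap.mem_ker] using hv
  rw [h4] at h5
  simpa using h5

lemma mul_cancel_of_rank {n m : ℕ} {S : Matrix (Fin n) (Fin m) ℝ} (hS : S.rank = m)
    {N : Matrix (Fin m) (Fin m) ℝ} (hN : S * N = 0) : N = 0 := by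
  ext i j
  have hcol : S.mulVec (fun k => N k j) = 0 := by
    funext l
    have := congrFun (congrFun hN l) j
    simpa [Matrix.mulVec, Matrix.mul_apply, dotProduct] using this
  have := mulVec_inj_of_rank hS hcol
  exact congrFun this i

lemma lyap_trace_key {n m : ℕ} (S : Matrix (Fin n) (Fin m) ℝ)
    (B : Matrix (Fin m) (Fin m) ℝ) :
    (Bᵀ*((Sᵀ*S)*B + B*(Sᵀ*S))).trace = frobSq (S*B) + frobSq (B*Sᵀ) := by
  rw [frobSq_eq_trace, frobSq_eq_trace, Matrix.mul_add, trace_add]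
  congr 1
  · rw [Matrix.transpose_mul]; simp [Matrix.mul_assoc]
  · rw [Matrix.transpose_mul, Matrix.transpose_transpose,
      Matrix.trace_mul_comm]
    calc (B * (Sᵀ * S) * Bᵀ).trace
        = ((B * Sᵀ) * (S * Bᵀ)).trace := by simp only [Matrix.mul_assoc]
      _ = ((S * Bᵀ) * (B * Sᵀ)).trace := Matrix.trace_mul_comm _ _
      _ = (S * Bᵀ * (B * Sᵀ)).trace := rfl

/-- For `S` of full column rank, the minimization of `‖Y - S B‖` (Frobenius) over
symmetric `B` has a unique solution, which is the unique solution of the Lyapunov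
equation `(SᵀS) B + B (SᵀS) = SᵀY + YᵀS`. -/
theorem lmsd_symmetric_secant_lyapunov
    (n m : ℕ) (S Y : Matrix (Fin n) (Fin m) ℝ) (hS : S.rank = m) :
    ∃ B : Matrix (Fin m) (Fin m) ℝ, B.IsSymm ∧
      (∀ C : Matrix (Fin m) (Fin m) ℝ, C.IsSymm →
        frobSq (Y - S * B) ≤ frobSq (Y - S * C)) ∧
      (∀ B' : Matrix (Fin m) (Fin m) ℝ, B'.IsSymm →
        (∀ C : Matrix (Fin m) (Fin m) ℝ, C.IsSymm →
          frobSq (Y - S * B') ≤ frobSq (Y - S * C)) → B' = B) ∧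
      (Sᵀ * S) * B + B * (Sᵀ * S) = Sᵀ * Y + Yᵀ * S ∧
      (∀ B' : Matrix (Fin m) (Fin m) ℝ,
        (Sᵀ * S) * B' + B' * (Sᵀ * S) = Sᵀ * Y + Yᵀ * S → B' = B) := by
  classical
  have hMsymm : (Sᵀ * S)ᵀ = Sᵀ * S := by
    rw [Matrix.transpose_mul, Matrix.transpose_transpose]
  -- injectivity of the Lyapunov operator
  have hinj : ∀ X : Matrix (Fin m) (Fin m) ℝ,
      (Sᵀ*S)*X + X*(Sᵀ*S) = 0 → X = 0 := by
    intro X h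
    have h0 : frobSq (S*X) + frobSq (X*Sᵀ) = 0 := by
      rw [← lyap_trace_key S X, h, Matrix.mul_zero, Matrix.trace_zero]
    have h1 : frobSq (S*X) = 0 := by
      have := frobSq_nonneg (S*X); have := frobSq_nonneg (X*Sᵀ); linarith
    exact mul_cancel_of_rank hS (frobSq_eq_zero h1)
  -- the Lyapunov operator as a linear map, and its surjectivity
  let L : Matrix (Fin m) (Fin m) ℝ →ₗ[ℝ] Matrix (Fin m) (Fin m) ℝ :=
    LinearMap.mulLeft ℝ (Sᵀ*S) + LinearMap.mulRight ℝ (Sᵀ*S)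
  have hL : ∀ X, L X = (Sᵀ*S)*X + X*(Sᵀ*S) := fun X => rfl
  have hLinj : Function.Injective L := by
    intro X Z hXZ
    have h0 : L (X - Z) = 0 := by rw [map_sub, hXZ, sub_self]
    have := hinj (X - Z) (by rw [← hL]; exact h0)
    exact sub_eq_zero.mp this
  have hLsurj : Function.Surjective L := LinearMap.injective_iff_surjective.mp hLinj
  obtain ⟨B, hB⟩ := hLsurj (Sᵀ*Y + Yᵀ*S)
  have hLy : (Sᵀ*S)*B + B*(Sᵀ*S) = Sᵀ*Y + Yᵀ*S := by rw [← hL]; exact hB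
  -- uniqueness of the Lyapunov solution
  have huniq : ∀ B' : Matrix (Fin m) (Fin m) ℝ,
      (Sᵀ*S)*B' + B'*(Sᵀ*S) = Sᵀ*Y + Yᵀ*S → B' = B := by
    intro B' h'
    have e : (Sᵀ*S)*(B' - B) + (B' - B)*(Sᵀ*S)
        = ((Sᵀ*S)*B' + B'*(Sᵀ*S)) - ((Sᵀ*S)*B + B*(Sᵀ*S)) := by noncomm_ring
    have hdiff : (Sᵀ*S)*(B' - B) + (B' - B)*(Sᵀ*S) = 0 := by
      rw [e, h', hLy, sub_self]
    exact sub_eq_zero.mp (hinj _ hdiff)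
  -- symmetry of B
  have hBsymm : Bᵀ = B := by
    refine huniq Bᵀ ?_
    have := congrArg Matrix.transpose hLy
    simp only [Matrix.transpose_add, Matrix.transpose_mul, Matrix.transpose_transpose,
      hMsymm] at this
    rw [add_comm] at this
    rw [this]
    abel
  -- the key expansion
  have hexp : ∀ C : Matrix (Fin m) (Fin m) ℝ, C.IsSymm →
      frobSq (Y - S*C) = frobSq (Y - S*B) + frobSq (S*(C - B)) := by
    intro C hC
    have hD : (C - B)ᵀ = C - B := by
      rw [Matrix.transpose_sub, hC, hBsymm]
    have hsplit : Y - S*C = (Y - S*B) - S*(C - B) := by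
      rw [Matrix.mul_sub]; abel
    rw [hsplit, frobSq_sub_expand]
    -- the cross terms vanish
    have hadd : Sᵀ*(Y - S*B) + (Sᵀ*(Y - S*B))ᵀ = 0 := by
      have h1 : Sᵀ*(Y - S*B) + (Sᵀ*(Y - S*B))ᵀ
          = (Sᵀ*Y + Yᵀ*S) - ((Sᵀ*S)*B + B*(Sᵀ*S)) := by
        rw [Matrix.transpose_mul, Matrix.transpose_sub, Matrix.transpose_mul, hBsymm]
        simp only [Matrix.mul_sub, Matrix.sub_mul, Matrix.mul_assoc,
          Matrix.transpose_transpose]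
        abel
      rw [h1, hLy, sub_self]
    have hG : (Sᵀ*(Y - S*B))ᵀ = -(Sᵀ*(Y - S*B)) := eq_neg_of_add_eq_zero_right hadd
    have e1 : (Y - S*B)ᵀ*(S*(C - B)) = -((Sᵀ*(Y - S*B))*(C - B)) := by
      rw [← Matrix.mul_assoc]
      have h2 : (Y - S*B)ᵀ*S = -(Sᵀ*(Y - S*B)) := by
        calc (Y - S*B)ᵀ*S = (Sᵀ*(Y - S*B))ᵀ := by
              rw [Matrix.transpose_mul, Matrix.transpose_transpose]
          _ = -(Sᵀ*(Y - S*B)) := hG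
      rw [h2, Matrix.neg_mul]
    have e2 : (S*(C - B))ᵀ*(Y - S*B) = (C - B)*(Sᵀ*(Y - S*B)) := by
      rw [Matrix.transpose_mul, hD, Matrix.mul_assoc]
    have hcross : ((Y - S*B)ᵀ*(S*(C - B))).trace + ((S*(C - B))ᵀ*(Y - S*B)).trace = 0 := by
      rw [e1, e2, Matrix.trace_neg, Matrix.trace_mul_comm]
      ring
    rw [hcross]
    ring
  -- assemble the result
  refine ⟨B, hBsymm, ?_, ?_, hLy, huniq⟩
  · intro C hC
    rw [hexp C hC]
    have := frobSq_nonneg (S*(C - B))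
    linarith
  · intro B' hB'symm hB'min
    have h1 := hB'min B hBsymm
    have h2 := hexp B' hB'symm
    have h3 : frobSq (S*(B' - B)) = 0 := by
      have := frobSq_nonneg (S*(B' - B)); linarith
    have h4 := mul_cancel_of_rank hS (frobSq_eq_zero h3)
    exact sub_eq_zero.mp h4
end

section
/- Let S ∈ ℝ^{n×m} have full column rank, Y ∈ ℝ^{n×m}, and suppose sym(SᵀY) := (SᵀY + YᵀS)/2 is symmetric positive definite. Let B be the unique solution of the Lyapunov equation (SᵀS) B + B (SᵀS) = 2 sym(SᵀY). Then the smallest eigenvalue of B is at least the smallest eigenvalue of (SᵀS)^{-1} sym(SᵀY), and the largest eigenvalue of B is at most the largest eigenvalue of (SᵀS)^{-1} sym(SᵀY). -/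
open Matrix

lemma lmsd_trace_tr_mul_self_nonneg {m : ℕ} (X : Matrix (Fin m) (Fin m) ℝ) :
    0 ≤ (Xᵀ * X).trace := by
  rw [Matrix.trace]
  refine Finset.sum_nonneg fun i _ => ?_
  simp only [Matrix.diag_apply, Matrix.mul_apply, Matrix.transpose_apply]
  exact Finset.sum_nonneg fun j _ => mul_self_nonneg _

lemma lmsd_eq_zero_of_trace_tr_mul_self {m : ℕ} (X : Matrix (Fin m) (Fin m) ℝ)
    (h : (Xᵀ * X).trace ≤ 0) : X = 0 := by
  have h0 : (Xᵀ * X).trace = 0 := le_antisymm h (lmsd_trace_tr_mul_self_nonneg X)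
  rw [Matrix.trace] at h0
  have h1 := (Finset.sum_eq_zero_iff_of_nonneg (fun i _ => by
    simp only [Matrix.diag_apply, Matrix.mul_apply, Matrix.transpose_apply]
    exact Finset.sum_nonneg fun j _ => mul_self_nonneg _)).mp h0
  ext i j
  have h2 := h1 j (Finset.mem_univ j)
  simp only [Matrix.diag_apply, Matrix.mul_apply, Matrix.transpose_apply] at h2
  have h3 := (Finset.sum_eq_zero_iff_of_nonneg (fun k _ => mul_self_nonneg (X k j))).mp h2
    i (Finset.mem_univ i)
  have := mul_self_eq_zero.mp h3
  simpa using this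

open scoped MatrixOrder in
/-- The solution of a Lyapunov equation with positive definite coefficient and
symmetric right-hand side is symmetric. -/
lemma lmsd_lyapunov_symm {m : ℕ} {A B C : Matrix (Fin m) (Fin m) ℝ}
    (hA : A.PosDef) (hAt : Aᵀ = A) (hC : Cᵀ = C) (hB : A * B + B * A = C) : Bᵀ = B := by
  classical
  set X := B - Bᵀ with hXdef
  have hXt : Xᵀ = -X := by simp [hXdef, transpose_sub, neg_sub]
  have h2 : A * Bᵀ + Bᵀ * A = C := by
    have := congrArg Matrix.transpose hB
    rw [transpose_add, transpose_mul, transpose_mul, hAt, hC] at this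
    linear_combination (norm := noncomm_ring) this
  have heq : A * X + X * A = 0 := by
    have : A * X + X * A = (A * B + B * A) - (A * Bᵀ + Bᵀ * A) := by
      simp only [hXdef]
      noncomm_ring
    rw [this, hB, h2, sub_self]
  haveI : Invertible A := hA.isUnit.invertible
  obtain ⟨R, hRt, hRR, hdetA⟩ : ∃ R : Matrix (Fin m) (Fin m) ℝ,
      Rᵀ = R ∧ R * R = A ∧ A.det ≠ 0 :=
    ⟨CFC.sqrt A, by
        have := (CFC.sqrt_nonneg A).posSemidef.1
        rwa [IsHermitian, conjTranspose_eq_transpose_of_trivial] at this,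
      CFC.sqrt_mul_sqrt_self A hA.posSemidef.nonneg,
      hA.det_pos.ne'⟩
  have hdetR : R.det ≠ 0 := by
    intro h
    exact hdetA (by rw [← hRR, det_mul, h, mul_zero])
  haveI : Invertible R := invertibleOfIsUnitDet R hdetR.isUnit
  have hAinv : A⁻¹ = R⁻¹ * R⁻¹ := by rw [← hRR, Matrix.mul_inv_rev]
  have hX2 : X = -(A⁻¹ * X * A) := by
    have h3 : A * X = -(X * A) := eq_neg_of_add_eq_zero_left heq
    calc X = A⁻¹ * (A * X) := by
          rw [← Matrix.mul_assoc, Matrix.inv_mul_of_invertible, Matrix.one_mul]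
    _ = A⁻¹ * -(X * A) := by rw [h3]
    _ = -(A⁻¹ * X * A) := by noncomm_ring
  set Z := R * X * R⁻¹ with hZdef
  have hZt : Zᵀ = -(R⁻¹ * X * R) := by
    rw [hZdef, transpose_mul, transpose_mul, hXt, transpose_nonsing_inv, hRt]
    noncomm_ring
  have key : (Xᵀ * X).trace = -((Zᵀ * Z).trace) := by
    have e1 : Xᵀ * X = -(X * X) := by rw [hXt]; noncomm_ring
    have e2 : X * X = -(X * (A⁻¹ * X * A)) := by
      nth_rewrite 2 [hX2]
      noncomm_ring
    have e3 : (X * (A⁻¹ * X * A)).trace = ((R * X * R⁻¹) * (R⁻¹ * X * R)).trace := by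
      rw [hAinv, ← hRR]
      rw [show X * (R⁻¹ * R⁻¹ * X * (R * R)) = (X * R⁻¹ * R⁻¹ * X * R) * R by noncomm_ring,
        Matrix.trace_mul_comm]
      congr 1
      noncomm_ring
    have e4 : (R * X * R⁻¹) * (R⁻¹ * X * R) = -(Z * Zᵀ) := by
      rw [hZt, hZdef]; noncomm_ring
    rw [e1, trace_neg, e2, trace_neg, neg_neg, e3, e4, trace_neg, Matrix.trace_mul_comm]
  have hXz : X = 0 := by
    apply lmsd_eq_zero_of_trace_tr_mul_self
    rw [key]
    simpa using lmsd_trace_tr_mul_self_nonneg Z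
  have : B - Bᵀ = 0 := hXz
  linear_combination (norm := noncomm_ring) -this

open scoped MatrixOrder in
/-- Rayleigh-quotient bounds: if `μ` is a generalized Rayleigh quotient of the
pencil `(C, A)` with `A` positive definite and `C` symmetric, then `μ` lies between
two eigenvalues of `A⁻¹ * C`. -/
lemma lmsd_rayleigh_bounds {m : ℕ} (A C : Matrix (Fin m) (Fin m) ℝ)
    (hA : A.PosDef) (hCt : Cᵀ = C)
    (μ : ℝ) (v : Fin m → ℝ) (hv : v ≠ 0)
    (hray : μ * (v ⬝ᵥ A *ᵥ v) = v ⬝ᵥ C *ᵥ v) :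
    (∃ (ν : ℝ) (w : Fin m → ℝ), w ≠ 0 ∧ (A⁻¹ * C) *ᵥ w = ν • w ∧ ν ≤ μ) ∧
    (∃ (ν : ℝ) (w : Fin m → ℝ), w ≠ 0 ∧ (A⁻¹ * C) *ᵥ w = ν • w ∧ μ ≤ ν) := by
  classical
  obtain ⟨R, hRt, hRR, hdetA⟩ : ∃ R : Matrix (Fin m) (Fin m) ℝ,
      Rᵀ = R ∧ R * R = A ∧ A.det ≠ 0 :=
    ⟨CFC.sqrt A, by
        have := (CFC.sqrt_nonneg A).posSemidef.1
        rwa [IsHermitian, conjTranspose_eq_transpose_of_trivial] at this,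
      CFC.sqrt_mul_sqrt_self A hA.posSemidef.nonneg,
      hA.det_pos.ne'⟩
  have hdetR : R.det ≠ 0 := by
    intro h
    exact hdetA (by rw [← hRR, det_mul, h, mul_zero])
  haveI : Invertible R := invertibleOfIsUnitDet R hdetR.isUnit
  have hRit : (R⁻¹)ᵀ = R⁻¹ := by rw [transpose_nonsing_inv, hRt]
  have hAinv : A⁻¹ = R⁻¹ * R⁻¹ := by rw [← hRR, Matrix.mul_inv_rev]
  set D := R⁻¹ * C * R⁻¹ with hDdef
  have hD : D.IsHermitian := by
    show Dᴴ = D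
    show Dᵀ = D
    rw [hDdef, transpose_mul, transpose_mul, hRit, hCt, Matrix.mul_assoc]
  set T := Matrix.toEuclideanLin D with hTdef
  have hT : T.IsSymmetric := Matrix.isHermitian_iff_isSymmetric.mp hD
  haveI : Nonempty (Fin m) := ⟨(Function.ne_iff.mp hv).choose⟩
  haveI : Nontrivial (EuclideanSpace ℝ (Fin m)) := inferInstance
  set u : Fin m → ℝ := R *ᵥ v with hudef
  have hu : u ≠ 0 := by
    intro h
    apply hv
    have : R⁻¹ *ᵥ (R *ᵥ v) = 0 := by rw [← hudef, h, mulVec_zero]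
    rwa [mulVec_mulVec, Matrix.inv_mul_of_invertible, one_mulVec] at this
  set uE : EuclideanSpace ℝ (Fin m) := (WithLp.equiv 2 (Fin m → ℝ)).symm u with hUdef
  have huE : uE ≠ 0 := by
    simpa [hUdef] using hu
  have hDu : D *ᵥ u = (R⁻¹ * C) *ᵥ v := by
    rw [hudef, mulVec_mulVec, hDdef]
    rw [Matrix.mul_assoc, Matrix.inv_mul_of_invertible, Matrix.mul_one]
  have hnum : (D *ᵥ u) ⬝ᵥ u = v ⬝ᵥ C *ᵥ v := by
    rw [hDu, hudef, dotProduct_mulVec, ← hRt, vecMul_transpose, mulVec_mulVec, hRt,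
      ← Matrix.mul_assoc, Matrix.mul_inv_of_invertible, Matrix.one_mul, dotProduct_comm]
  have hden : u ⬝ᵥ u = v ⬝ᵥ A *ᵥ v := by
    rw [hudef, dotProduct_mulVec, ← hRt, vecMul_transpose, mulVec_mulVec, hRt, hRR,
      dotProduct_comm]
  have hvAv : 0 < v ⬝ᵥ A *ᵥ v := hA.dotProduct_mulVec_pos hv
  have hval : RCLike.re (inner ℝ (T uE) uE : ℝ) / ‖uE‖ ^ 2 = μ := by
    have h1 : (inner ℝ (T uE) uE : ℝ) = (D *ᵥ u) ⬝ᵥ u := by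
      rw [hTdef, hUdef]
      simp [PiLp.inner_apply, dotProduct, mul_comm]
    have h2 : ‖uE‖ ^ 2 = u ⬝ᵥ u := by
      rw [← real_inner_self_eq_norm_sq]
      simp only [hUdef, WithLp.equiv_symm_apply, PiLp.inner_apply, dotProduct]
      simp [sq]
    rw [h2]
    simp only [RCLike.re_to_real]
    rw [h1, hnum, hden]
    field_simp
    linarith [hray]
  let Tc : EuclideanSpace ℝ (Fin m) →L[ℝ] EuclideanSpace ℝ (Fin m) :=
    LinearMap.toContinuousLinearMap T
  have hbound : ∀ x : {x : EuclideanSpace ℝ (Fin m) // x ≠ 0},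
      |RCLike.re (inner ℝ (T x.1) x.1 : ℝ) / ‖x.1‖ ^ 2| ≤ ‖Tc‖ := by
    rintro ⟨x, hx⟩
    have hx0 : (0:ℝ) < ‖x‖ ^ 2 := by
      have := norm_pos_iff.mpr hx
      positivity
    rw [abs_div, abs_of_pos hx0, div_le_iff₀ hx0]
    have h1 : |RCLike.re (inner ℝ (T x) x : ℝ)| ≤ ‖T x‖ * ‖x‖ := by
      simp only [RCLike.re_to_real]
      exact abs_real_inner_le_norm _ _
    have h2 : ‖T x‖ ≤ ‖Tc‖ * ‖x‖ := Tc.le_opNorm x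
    calc |RCLike.re (inner ℝ (T x) x : ℝ)| ≤ ‖T x‖ * ‖x‖ := h1
    _ ≤ (‖Tc‖ * ‖x‖) * ‖x‖ := by nlinarith [norm_nonneg x, norm_nonneg (T x)]
    _ = ‖Tc‖ * ‖x‖ ^ 2 := by ring
  have hbddA : BddAbove (Set.range fun x : {x : EuclideanSpace ℝ (Fin m) // x ≠ 0} =>
      RCLike.re (inner ℝ (T x.1) x.1 : ℝ) / ‖x.1‖ ^ 2) := by
    refine ⟨‖Tc‖, ?_⟩
    rintro y ⟨x, rfl⟩
    exact (le_abs_self _).trans (hbound x)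
  have hbddB : BddBelow (Set.range fun x : {x : EuclideanSpace ℝ (Fin m) // x ≠ 0} =>
      RCLike.re (inner ℝ (T x.1) x.1 : ℝ) / ‖x.1‖ ^ 2) := by
    refine ⟨-‖Tc‖, ?_⟩
    rintro y ⟨x, rfl⟩
    exact neg_le_of_abs_le (hbound x)
  have hconv : ∀ ν : ℝ, Module.End.HasEigenvalue T ν →
      ∃ w : Fin m → ℝ, w ≠ 0 ∧ (A⁻¹ * C) *ᵥ w = ν • w := by
    intro ν hν
    obtain ⟨w, hw⟩ := hν.exists_hasEigenvector
    have hweq : T w = ν • w := hw.apply_eq_smul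
    set w0 : Fin m → ℝ := WithLp.equiv 2 (Fin m → ℝ) w with hw0
    have hw0ne : w0 ≠ 0 := by simpa [hw0] using hw.2
    have hDw : D *ᵥ w0 = ν • w0 := by
      have h := congrArg (WithLp.equiv 2 (Fin m → ℝ)) hweq
      rw [hTdef] at h
      simpa [hw0] using h
    refine ⟨R⁻¹ *ᵥ w0, ?_, ?_⟩
    · intro h
      apply hw0ne
      have h2 : R *ᵥ (R⁻¹ *ᵥ w0) = 0 := by rw [h, mulVec_zero]
      rwa [mulVec_mulVec, Matrix.mul_inv_of_invertible, one_mulVec] at h2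
    · have hMM : A⁻¹ * C * R⁻¹ = R⁻¹ * D := by rw [hAinv, hDdef]; noncomm_ring
      rw [mulVec_mulVec, hMM, ← mulVec_mulVec, hDw, mulVec_smul]
  constructor
  · obtain ⟨w, hwne, hwe⟩ := hconv _ hT.hasEigenvalue_iInf_of_finiteDimensional
    refine ⟨_, w, hwne, hwe, ?_⟩
    have := ciInf_le hbddB ⟨uE, huE⟩
    rwa [hval] at this
  · obtain ⟨w, hwne, hwe⟩ := hconv _ hT.hasEigenvalue_iSup_of_finiteDimensional
    refine ⟨_, w, hwne, hwe, ?_⟩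
    have := le_ciSup hbddA ⟨uE, huE⟩
    rwa [hval] at this

/-- Eigenvalue bounds for the solution of the LMSD Lyapunov equation: if
`sym(SᵀY) = (SᵀY + YᵀS)/2` is positive definite and `B` solves
`(SᵀS) B + B (SᵀS) = 2 sym(SᵀY)`, then every eigenvalue of `B` is bounded below by
some eigenvalue of `M = (SᵀS)⁻¹ sym(SᵀY)` and above by some eigenvalue of `M`
(equivalently, it lies between the extreme eigenvalues of `M`). -/
theorem lmsd_lyapunov_eigenvalue_bounds
    (n m : ℕ) (S Y : Matrix (Fin n) (Fin m) ℝ) (hS : S.rank = m)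
    (hpos : (((1 : ℝ) / 2) • (Sᵀ * Y + Yᵀ * S)).PosDef)
    (B : Matrix (Fin m) (Fin m) ℝ)
    (hB : (Sᵀ * S) * B + B * (Sᵀ * S) = Sᵀ * Y + Yᵀ * S) :
    ∀ (μ : ℝ) (v : Fin m → ℝ), v ≠ 0 → B.mulVec v = μ • v →
      (∃ (ν : ℝ) (w : Fin m → ℝ), w ≠ 0 ∧
        ((Sᵀ * S)⁻¹ * (((1 : ℝ) / 2) • (Sᵀ * Y + Yᵀ * S))).mulVec w = ν • w ∧ ν ≤ μ) ∧
      (∃ (ν : ℝ) (w : Fin m → ℝ), w ≠ 0 ∧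
        ((Sᵀ * S)⁻¹ * (((1 : ℝ) / 2) • (Sᵀ * Y + Yᵀ * S))).mulVec w = ν • w ∧ μ ≤ ν) := by
  intro μ v hv hvec
  set A := Sᵀ * S with hAdef
  set C := ((1 : ℝ) / 2) • (Sᵀ * Y + Yᵀ * S) with hCdef
  have hA : A.PosDef := by
    have hinj : LinearMap.ker S.mulVecLin = ⊥ := by
      have h1 : Module.finrank ℝ (LinearMap.range S.mulVecLin)
          + Module.finrank ℝ (LinearMap.ker S.mulVecLin) = m := by
        simpa using LinearMap.finrank_range_add_finrank_ker S.mulVecLin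
      have h2 : Module.finrank ℝ (LinearMap.range S.mulVecLin) = m := hS
      rw [h2] at h1
      have : Module.finrank ℝ (LinearMap.ker S.mulVecLin) = 0 := by omega
      exact Submodule.finrank_eq_zero.mp this
    refine posDef_iff_dotProduct_mulVec.mpr ⟨isHermitian_conjTranspose_mul_self S, fun x hx => ?_⟩
    have hSx : S *ᵥ x ≠ 0 := by
      intro h
      exact hx (LinearMap.ker_eq_bot.mp hinj (by simpa [S.mulVecLin_apply] using h))
    have : star x ⬝ᵥ (Sᵀ * S) *ᵥ x = (S *ᵥ x) ⬝ᵥ (S *ᵥ x) := by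
      rw [← mulVec_mulVec, dotProduct_mulVec, show star x = x from rfl, vecMul_transpose]
    rw [hAdef, this]
    have := dotProduct_star_self_pos_iff (R := ℝ) (v := S *ᵥ x)
    simpa [show star (S *ᵥ x) = S *ᵥ x from rfl] using this.mpr hSx
  have hAt : Aᵀ = A := isHermitian_conjTranspose_mul_self S
  have hC0 : (Sᵀ * Y + Yᵀ * S)ᵀ = Sᵀ * Y + Yᵀ * S := by
    rw [transpose_add, transpose_mul, transpose_mul, transpose_transpose, transpose_transpose,
      add_comm]
  have hCt : Cᵀ = C := by rw [hCdef, transpose_smul, hC0]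
  have hBsym : Bᵀ = B := lmsd_lyapunov_symm hA hAt hC0 hB
  clear_value A C
  -- the Rayleigh identity μ (vᵀ A v) = vᵀ C v
  have hray : μ * (v ⬝ᵥ A *ᵥ v) = v ⬝ᵥ C *ᵥ v := by
    have h0 : v ⬝ᵥ (A * B + B * A) *ᵥ v = v ⬝ᵥ (Sᵀ * Y + Yᵀ * S) *ᵥ v := by rw [hB]
    have hvB : v ᵥ* B = μ • v := by
      rw [← mulVec_transpose, hBsym, hvec]
    rw [add_mulVec, dotProduct_add, ← mulVec_mulVec, ← mulVec_mulVec, hvec, mulVec_smul,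
      dotProduct_smul, dotProduct_mulVec, dotProduct_mulVec, hvB, smul_dotProduct] at h0
    have hcomm : (A *ᵥ v) ⬝ᵥ v = v ⬝ᵥ A *ᵥ v := dotProduct_comm _ _
    rw [show v ᵥ* A = Aᵀ *ᵥ v from (mulVec_transpose A v).symm, hAt, hcomm] at h0
    have hC2 : v ⬝ᵥ C *ᵥ v = (1 / 2) * (v ⬝ᵥ (Sᵀ * Y + Yᵀ * S) *ᵥ v) := by
      rw [hCdef, smul_mulVec, dotProduct_smul, smul_eq_mul]
    simp only [smul_eq_mul] at h0
    rw [hC2]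
    linarith [h0]
  exact lmsd_rayleigh_bounds A C hA hCt μ v hv hray
end

section
/- Let A₊ be an n×n symmetric positive definite matrix, S ∈ ℝ^{n×m} of full column rank, Y = A₊ S, and let B be the unique symmetric solution of (SᵀS) B + B (SᵀS) = SᵀY + YᵀS. Then every eigenvalue λ of B satisfies λ_min(A₊) ≤ λ ≤ λ_max(A₊). -/
open Matrix

lemma rayleigh_bounds {n : ℕ} [NeZero n] {A : Matrix (Fin n) (Fin n) ℝ} (hA : A.IsHermitian)
    (w : Fin n → ℝ) :
    (⨅ i, hA.eigenvalues i) * (w ⬝ᵥ w) ≤ w ⬝ᵥ (A *ᵥ w) ∧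
      w ⬝ᵥ (A *ᵥ w) ≤ (⨆ i, hA.eigenvalues i) * (w ⬝ᵥ w) := by
  set U := (hA.eigenvectorUnitary : Matrix (Fin n) (Fin n) ℝ) with hU
  have hstar : star U = Uᵀ := by
    rw [star_eq_conjTranspose, conjTranspose_eq_transpose_of_trivial]
  set c := Uᵀ *ᵥ w with hc
  have hUU : U * Uᵀ = 1 := by
    rw [← hstar]; exact (Matrix.mem_unitaryGroup_iff).mp hA.eigenvectorUnitary.2
  have hdot : w ⬝ᵥ w = c ⬝ᵥ c := by
    rw [hc, dotProduct_mulVec, vecMul_transpose, mulVec_mulVec, hUU, one_mulVec]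
  have hspec : A = U * diagonal (RCLike.ofReal ∘ hA.eigenvalues) * Uᵀ := by
    rw [← hstar]; exact hA.spectral_theorem
  have hquad : w ⬝ᵥ (A *ᵥ w) = ∑ i, hA.eigenvalues i * (c i)^2 := by
    conv_lhs => rw [hspec]
    rw [mul_assoc, ← mulVec_mulVec, dotProduct_mulVec, ← mulVec_transpose,
      ← mulVec_mulVec, ← hc]
    simp [dotProduct, mulVec_diagonal]
    exact Finset.sum_congr rfl fun i _ => by ring
  have hcsq : c ⬝ᵥ c = ∑ i, (c i)^2 := by
    simp [dotProduct, sq]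
  constructor
  · rw [hquad, hdot, hcsq, Finset.mul_sum]
    exact Finset.sum_le_sum fun i _ =>
      mul_le_mul_of_nonneg_right (ciInf_le (Finite.bddBelow_range _) i) (sq_nonneg _)
  · rw [hquad, hdot, hcsq, Finset.mul_sum]
    exact Finset.sum_le_sum fun i _ =>
      mul_le_mul_of_nonneg_right (le_ciSup (Finite.bddAbove_range _) i) (sq_nonneg _)

/-- If `Y = A₊ S` with `A₊` symmetric positive definite and `B` is the symmetric
solution of the Lyapunov equation `(SᵀS) B + B (SᵀS) = SᵀY + YᵀS`, then every
eigenvalue of `B` lies between the extreme eigenvalues of `A₊`. -/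
theorem lmsd_lyapunov_eigenvalues_in_hessian_spectrum
    (n m : ℕ) (Ap : Matrix (Fin n) (Fin n) ℝ) (hAp : Ap.PosDef)
    (S : Matrix (Fin n) (Fin m) ℝ) (hS : S.rank = m)
    (Y : Matrix (Fin n) (Fin m) ℝ) (hY : Y = Ap * S)
    (B : Matrix (Fin m) (Fin m) ℝ) (hBsymm : B.IsSymm)
    (hB : (Sᵀ * S) * B + B * (Sᵀ * S) = Sᵀ * Y + Yᵀ * S) :
    ∀ (μ : ℝ) (v : Fin m → ℝ), v ≠ 0 → B.mulVec v = μ • v →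
      (⨅ i, hAp.1.eigenvalues i) ≤ μ ∧ μ ≤ ⨆ i, hAp.1.eigenvalues i := by
  intro μ v hv heig
  -- S has trivial kernel
  have hker : LinearMap.ker S.mulVecLin = ⊥ := by
    have hrn := LinearMap.finrank_range_add_finrank_ker S.mulVecLin
    rw [Module.finrank_pi, Fintype.card_fin] at hrn
    have hr : Module.finrank ℝ (LinearMap.range S.mulVecLin) = m := hS
    have : Module.finrank ℝ (LinearMap.ker S.mulVecLin) = 0 := by omega
    exact Submodule.finrank_eq_zero.mp this
  set w := S *ᵥ v with hw
  have hwne : w ≠ 0 := by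
    intro h
    exact hv (by simpa [hker] using (LinearMap.mem_ker (f := S.mulVecLin)).mpr h)
  have : NeZero n := ⟨by rintro rfl; exact hwne (Subsingleton.elim _ _)⟩
  have hApT : Apᵀ = Ap := by
    rw [← conjTranspose_eq_transpose_of_trivial]; exact hAp.1
  have hBT : Bᵀ = B := hBsymm
  have hST : ∀ x : Fin n → ℝ, v ⬝ᵥ (Sᵀ *ᵥ x) = w ⬝ᵥ x := fun x => by
    rw [dotProduct_mulVec, vecMul_transpose]
  have hkey : μ * (w ⬝ᵥ w) = w ⬝ᵥ (Ap *ᵥ w) := by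
    have h := congrArg (fun M => v ⬝ᵥ (M *ᵥ v)) hB
    simp only [add_mulVec, dotProduct_add, ← mulVec_mulVec] at h
    rw [heig, mulVec_smul, mulVec_smul, dotProduct_smul] at h
    rw [dotProduct_mulVec v B, ← mulVec_transpose, hBT, heig, smul_dotProduct] at h
    rw [hST, hST] at h
    have hYv : Y *ᵥ (v) = Ap *ᵥ w := by rw [hY, ← mulVec_mulVec, hw]
    have hYTv : Yᵀ *ᵥ (S *ᵥ v) = Sᵀ *ᵥ (Ap *ᵥ w) := by
      rw [hY, transpose_mul, hApT, ← mulVec_mulVec, hw]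
    rw [hYv, hYTv, hST, ← hw] at h
    simp only [smul_eq_mul] at h
    linarith
  have hww : 0 < w ⬝ᵥ w := by
    have h := Matrix.dotProduct_self_star_pos_iff (v := w)
    simpa using h.mpr hwne
  obtain ⟨h1, h2⟩ := rayleigh_bounds hAp.1 w
  constructor
  · have := h1.trans_eq hkey.symm
    exact le_of_mul_le_mul_right this hww
  · have := hkey.trans_le h2
    exact le_of_mul_le_mul_right this hww
end

section
/- Let G ∈ ℝ^{n×m} have full column rank with QR decomposition G = QR (Q having orthonormal columns, R upper triangular invertible), and let D = diag(α₁,…,α_m) be invertible. Let T ∈ ℝ^{m×m} be any matrix and write T = L + Λ + U with L strictly lower triangular, Λ diagonal, U strictly upper triangular. Define S = -G D^{-1}, Y such that Qᵀ Y D = -T R (i.e., the projected relation of the LMSD method), and ΔY = Q (U - Lᵀ) R D^{-1}. If additionally Y = Q Qᵀ Y (i.e., the columns of Y lie in the column space of Q), then (Y + ΔY)ᵀ S = D^{-1} Rᵀ (L + Λ + Lᵀ) R D^{-1}, which is symmetric. -/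
open Matrix

/-- Fletcher's symmetrization as a perturbation of `Y`: with `G = QR` of full column
rank, `D = diag(α)` invertible, `T = L + Λ + U` (strict lower / diagonal / strict upper),
`S = -G D⁻¹`, `Qᵀ Y D = -T R`, and `Y` in the column space of `Q`, the perturbation
`ΔY = Q (U - Lᵀ) R D⁻¹` gives `(Y + ΔY)ᵀ S = D⁻¹ Rᵀ (L + Λ + Lᵀ) R D⁻¹`, a symmetric
matrix. -/
theorem fletcher_perturbation_symmetrizes
    (n m : ℕ) (G Q : Matrix (Fin n) (Fin m) ℝ) (R : Matrix (Fin m) (Fin m) ℝ)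
    (hG : G.rank = m) (hQR : G = Q * R) (hQ : Qᵀ * Q = 1)
    (hRtri : ∀ i j : Fin m, j < i → R i j = 0) (hR : IsUnit R.det)
    (α : Fin m → ℝ) (hα : ∀ i, α i ≠ 0)
    (T L Lam U : Matrix (Fin m) (Fin m) ℝ)
    (hT : T = L + Lam + U)
    (hL : ∀ i j : Fin m, i ≤ j → L i j = 0)
    (hLam : ∃ d : Fin m → ℝ, Lam = Matrix.diagonal d)
    (hU : ∀ i j : Fin m, j ≤ i → U i j = 0)
    (Y : Matrix (Fin n) (Fin m) ℝ)
    (hYproj : Qᵀ * Y * Matrix.diagonal α = -(T * R))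
    (hYspan : Y = Q * (Qᵀ * Y)) :
    (Y + Q * (U - Lᵀ) * R * (Matrix.diagonal α)⁻¹)ᵀ * (-(G * (Matrix.diagonal α)⁻¹)) =
      (Matrix.diagonal α)⁻¹ * Rᵀ * (L + Lam + Lᵀ) * R * (Matrix.diagonal α)⁻¹ ∧
    ((Matrix.diagonal α)⁻¹ * Rᵀ * (L + Lam + Lᵀ) * R * (Matrix.diagonal α)⁻¹).IsSymm := by
  obtain ⟨d, hd⟩ := hLam
  set D := Matrix.diagonal α with hDdef
  have hDdet : IsUnit D.det := by
    rw [hDdef, Matrix.det_diagonal]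
    exact isUnit_iff_ne_zero.mpr (Finset.prod_ne_zero_iff.mpr fun i _ => hα i)
  have hDinv : D * D⁻¹ = 1 := Matrix.mul_nonsing_inv _ hDdet
  have hDiT : (D⁻¹)ᵀ = D⁻¹ := by
    rw [Matrix.transpose_nonsing_inv, hDdef, Matrix.diagonal_transpose]
  have hLamT : Lamᵀ = Lam := by rw [hd, Matrix.diagonal_transpose]
  have hQY : Qᵀ * Y = -(T * R) * D⁻¹ := by
    have h := congrArg (· * D⁻¹) hYproj
    simpa [Matrix.mul_assoc, hDinv] using h
  have key : (Y + Q * (U - Lᵀ) * R * D⁻¹)ᵀ * (-(G * D⁻¹)) =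
      D⁻¹ * Rᵀ * (L + Lam + Lᵀ) * R * D⁻¹ := by
    have step : Y + Q * (U - Lᵀ) * R * D⁻¹ = Q * (((U - Lᵀ - T) * R) * D⁻¹) := by
      conv_lhs => rw [hYspan, hQY]
      simp only [Matrix.sub_mul, Matrix.mul_sub, Matrix.mul_neg, Matrix.neg_mul,
        Matrix.mul_assoc]
      abel
    have hQ' : ∀ M : Matrix (Fin m) (Fin m) ℝ, Qᵀ * (Q * M) = M := fun M => by
      rw [← Matrix.mul_assoc, hQ, Matrix.one_mul]
    rw [step, hQR]
    simp only [Matrix.transpose_mul, Matrix.transpose_sub, Matrix.transpose_transpose,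
      hDiT, Matrix.mul_neg, Matrix.neg_mul, Matrix.mul_assoc, hQ']
    have hTT : Uᵀ - L - Tᵀ = -(L + Lam + Lᵀ) := by
      rw [hT]
      simp only [Matrix.transpose_add, hLamT]
      abel
    rw [hTT]
    rw [Matrix.neg_mul, Matrix.mul_neg, Matrix.mul_neg, neg_neg]
  refine ⟨key, ?_⟩
  unfold Matrix.IsSymm
  rw [Matrix.transpose_mul, Matrix.transpose_mul, Matrix.transpose_mul,
    Matrix.transpose_mul, hDiT, Matrix.transpose_transpose]
  have : (L + Lam + Lᵀ)ᵀ = L + Lam + Lᵀ := by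
    simp only [Matrix.transpose_add, hLamT, Matrix.transpose_transpose]
    abel
  rw [this]
  simp [Matrix.mul_assoc]
end
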